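/- arXiv:1306.1572 — 5 statements merged into one kernel-verified Lean document; each statement's English description precedes it below -/
import Mathlib

section
/- Let k ≥ 1 and let G be a multigraph on n vertices with |E| = k·n − k, and let u and v be two vertices of G. Then the pure condition of G with standard tie-down at u is the zero polynomial if and only if the pure condition of G with standard tie-down at v is the zero polynomial; i.e., the vanishing of the pure condition is independent of the choice of tie-down vertex. -/
open MvPolynomial

/-- The sub-multigraph with edge set `F` (of a multigraph with endpoint maps
`tail`, `head`) is `(k,ℓ)`-sparse: every nonempty vertex subset `W` induces at
most `k·|W| − ℓ` edges of `F`. -/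
def SparseOn {V E : Type} [DecidableEq V] (tail head : E → V) (k ℓ : ℤ)
    (F : Finset E) : Prop :=
  ∀ W : Finset V, W.Nonempty →
    ((F.filter fun e => tail e ∈ W ∧ head e ∈ W).card : ℤ) ≤ k * (W.card : ℤ) - ℓ

/-- The sub-multigraph with edge set `F` of a bicolored multigraph (red edges are
those with `red e = true`) is `[a,b]`-sparse: there is a subset `B'` of the black
edges of `F` such that the red edges of `F` together with `B'` form an `(a,a)`-sparse
multigraph and the remaining black edges of `F` form a `(b,b)`-sparse multigraph. -/
def ABSparseOn {V E : Type} [DecidableEq V] [DecidableEq E] (tail head : E → V)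
    (red : E → Bool) (a b : ℕ) (F : Finset E) : Prop :=
  ∃ B' ⊆ F.filter fun e => red e = false,
    SparseOn tail head (a : ℤ) (a : ℤ) ((F.filter fun e => red e = true) ∪ B') ∧
    SparseOn tail head (b : ℤ) (b : ℤ) ((F.filter fun e => red e = false) \ B')

/-- `T ⊆ E` is a spanning tree: it has `n − 1` edges and the graph on `Fin n`
with edge set `T` is connected. -/
def IsSpanningTree {n : ℕ} {E : Type} (tail head : E → Fin n) (T : Finset E) : Prop :=
  T.card = n - 1 ∧
    (SimpleGraph.fromRel fun u v => ∃ e ∈ T, tail e = u ∧ head e = v).Connected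

/-- The edge set `F` is the disjoint union of `a` spanning trees. -/
def IsTreePartition {n : ℕ} {E : Type} [DecidableEq E] (tail head : E → Fin n)
    (a : ℕ) (F : Finset E) : Prop :=
  ∃ T : Fin a → Finset E, (∀ i, IsSpanningTree tail head (T i)) ∧
    (∀ i j, i ≠ j → Disjoint (T i) (T j)) ∧ Finset.univ.biUnion T = F

/-- `W` is a proper block of a `(k,k)`-graph on `n` vertices: `2 ≤ |W| < n` and the
induced multigraph on `W` is `(k,k)`-tight (i.e. `(k,k)`-sparse with exactly
`k·|W| − k` induced edges). -/
def IsProperBlock {n : ℕ} {E : Type} [Fintype E] (tail head : E → Fin n) (k : ℕ)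
    (W : Finset (Fin n)) : Prop :=
  2 ≤ W.card ∧ W.card < n ∧
    (∀ W' ⊆ W, W'.Nonempty →
      ((Finset.univ.filter fun e => tail e ∈ W' ∧ head e ∈ W').card : ℤ) ≤
        (k : ℤ) * (W'.card : ℤ) - (k : ℤ)) ∧
    ((Finset.univ.filter fun e => tail e ∈ W ∧ head e ∈ W).card : ℤ) =
      (k : ℤ) * (W.card : ℤ) - (k : ℤ)

/-- The vertex type of the contraction `G/H` by the vertex set `W`: the vertices
outside `W` together with a single new vertex (`Sum.inr ()`). -/
abbrev ContrV (n : ℕ) (W : Finset (Fin n)) : Type := {v : Fin n // v ∉ W} ⊕ Unit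

/-- The projection of the vertices of `G` onto the vertices of `G/H`. -/
def contrMap {n : ℕ} (W : Finset (Fin n)) (v : Fin n) : ContrV n W :=
  if h : v ∈ W then Sum.inr () else Sum.inl ⟨v, h⟩

/-- The pure condition of an `[a,b]`-frame: the determinant of the generic rigidity
matrix with the standard tie-down at `u`.  Rows are indexed by edges `E'` together
with `k` tie-down rows, transported to the column index type `V × Fin k` by the
equivalence `σ`.  The row of an edge `e` has the variable `X (var e, i)` in column
`(tail e, i)` and its negative in column `(head e, i)`, except that rows of red edges
vanish in all columns `(·, i)` with `a ≤ i`.  The `i`-th tie-down row has a `1` in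
column `(u, i)` and `0` elsewhere.  The polynomial lives in
`S = MvPolynomial (E × Fin k) ℝ`, the variables of an edge `e` of the (sub)graph
being indexed via `var e : E`. -/
noncomputable def pureCond {E E' V : Type} [Fintype V] [DecidableEq V] (k a : ℕ)
    (tail head : E' → V) (red : E' → Bool) (var : E' → E) (u : V)
    (σ : (E' ⊕ Fin k) ≃ (V × Fin k)) : MvPolynomial (E × Fin k) ℝ :=
  Matrix.det (Matrix.of fun r c : V × Fin k =>
    Sum.elim
      (fun e =>
        if red e = true ∧ a ≤ (c.2 : ℕ) then 0
        else if c.1 = tail e then (X (var e, c.2) : MvPolynomial (E × Fin k) ℝ)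
        else if c.1 = head e then -X (var e, c.2)
        else 0)
      (fun i => if c = (u, i) then 1 else 0)
      (σ.symm r))

/-- The pure condition of a `k`-frame (uncolored body-and-bar setting): the
determinant of the generic rigidity matrix with the standard tie-down at `u`. -/
noncomputable def pureCondBar {E E' V : Type} [Fintype V] [DecidableEq V] (k : ℕ)
    (tail head : E' → V) (var : E' → E) (u : V)
    (σ : (E' ⊕ Fin k) ≃ (V × Fin k)) : MvPolynomial (E × Fin k) ℝ :=
  pureCond k k tail head (fun _ => false) var u σ

/-- The rigidity matrix `M(G(p))` of an `[a,b]`-frame evaluated at the point `p`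
(no tie-down rows). -/
def rigidityMatrixR {E : Type} {n k : ℕ} (a : ℕ) (tail head : E → Fin n)
    (red : E → Bool) (p : E × Fin k → ℝ) : Matrix E (Fin n × Fin k) ℝ :=
  Matrix.of fun e c =>
    if red e = true ∧ a ≤ (c.2 : ℕ) then 0
    else if c.1 = tail e then p (e, c.2)
    else if c.1 = head e then -p (e, c.2)
    else 0

/-- The edge `e` is in the support of the polynomial `f`: some variable `X (e, i)`
occurs in `f`. -/
def InSupport {E : Type} [DecidableEq E] {k : ℕ} (f : MvPolynomial (E × Fin k) ℝ)
    (e : E) : Prop :=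
  ∃ i : Fin k, (e, i) ∈ f.vars

/-- `p` is a generic point of `V(f)`: `f` vanishes at `p` and every polynomial
vanishing at `p` is divisible by `f`. -/
def GenericOn {E : Type} {k : ℕ} (f : MvPolynomial (E × Fin k) ℝ)
    (p : E × Fin k → ℝ) : Prop :=
  eval p f = 0 ∧ ∀ h : MvPolynomial (E × Fin k) ℝ, eval p h = 0 → f ∣ h

/-- A bicolored multigraph is an `[a,b]`-circuit if it is not `[a,b]`-sparse but every
proper subset of its edge set is `[a,b]`-sparse. -/
def ABCircuit {V E : Type} [Fintype E] [DecidableEq V] [DecidableEq E]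
    (tail head : E → V) (red : E → Bool) (a b : ℕ) : Prop :=
  ¬ ABSparseOn tail head red a b (Finset.univ : Finset E) ∧
    ∀ F : Finset E, F ⊂ Finset.univ → ABSparseOn tail head red a b F

/-- An `[a,b]`-graph is irreducible if for every edge `e₀`, adding a new edge parallel
to `e₀` with the same endpoints and color yields an `[a,b]`-circuit. -/
def ABIrreducibleGraph {V E : Type} [Fintype E] [DecidableEq V] [DecidableEq E]
    (tail head : E → V) (red : E → Bool) (a b : ℕ) : Prop :=
  ∀ e₀ : E,
    ABCircuit (Sum.elim tail fun _ : Unit => tail e₀)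
      (Sum.elim head fun _ : Unit => head e₀)
      (Sum.elim red fun _ : Unit => red e₀) a b

/-- The out-degree of the vertex `v` under the orientation `o` (`o e = true` means `e`
is directed from `tail e` to `head e`, `o e = false` the reverse). -/
def outDeg {n : ℕ} {E : Type} [Fintype E] (tail head : E → Fin n) (o : E → Bool)
    (v : Fin n) : ℕ :=
  (Finset.univ.filter fun e =>
    (o e = true ∧ tail e = v) ∨ (o e = false ∧ head e = v)).card

/-- The orientation `o` has a directed cycle (polygon): a nonempty closed walk
traversing distinct edges, each in its assigned direction. -/
def HasDirCycle {n : ℕ} {E : Type} (tail head : E → Fin n) (o : E → Bool) : Prop :=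
  ∃ m : ℕ, 0 < m ∧ ∃ (es : Fin m → E) (vs : Fin (m + 1) → Fin n),
    Function.Injective es ∧ vs 0 = vs (Fin.last m) ∧
    ∀ j : Fin m,
      (o (es j) = true ∧ tail (es j) = vs j.castSucc ∧ head (es j) = vs j.succ) ∨
      (o (es j) = false ∧ head (es j) = vs j.castSucc ∧ tail (es j) = vs j.succ)


namespace Stmt7Aux

variable {n k : ℕ} {E : Type} [Fintype E]

noncomputable def Mat (tail head : E → Fin n) (u : Fin n)
    (σ : (E ⊕ Fin k) ≃ (Fin n × Fin k)) :
    Matrix (Fin n × Fin k) (Fin n × Fin k) (MvPolynomial (E × Fin k) ℝ) :=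
  Matrix.of fun r c =>
    Sum.elim
      (fun e => if c.1 = tail e then (X (e, c.2) : MvPolynomial (E × Fin k) ℝ)
        else if c.1 = head e then -X (e, c.2) else 0)
      (fun i => if c = (u, i) then 1 else 0)
      (σ.symm r)

noncomputable def C (n k : ℕ) (E : Type) (u v : Fin n) :
    Matrix (Fin n × Fin k) (Fin n × Fin k) (MvPolynomial (E × Fin k) ℝ) :=
  Matrix.of fun p q =>
    (if p = q then 1 else 0) +
      ((if p.2 = q.2 ∧ q.1 = v then 1 else 0) - (if p.2 = q.2 ∧ q.1 = u then 1 else 0))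

lemma rowsum (tail head : E → Fin n) (hlt : ∀ e, tail e ≠ head e) (u : Fin n)
    (σ : (E ⊕ Fin k) ≃ (Fin n × Fin k)) (r : Fin n × Fin k) (i : Fin k) :
    ∑ a : Fin n, Mat tail head u σ r (a, i) =
      Sum.elim (fun _ => (0 : MvPolynomial (E × Fin k) ℝ))
        (fun j => if (u, j) = ((u, i) : Fin n × Fin k) then 1 else 0) (σ.symm r) := by
  unfold Mat
  rcases h : σ.symm r with e | j
  · simp only [Matrix.of_apply, h, Sum.elim_inl]
    have step : ∀ a : Fin n,
        (if a = tail e then (X (e, i) : MvPolynomial (E × Fin k) ℝ)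
          else if a = head e then -X (e, i) else 0) =
        (if a = tail e then (X (e, i) : MvPolynomial (E × Fin k) ℝ) else 0) +
        (if a = head e then -X (e, i) else 0) := by
      intro a
      by_cases h1 : a = tail e
      · subst h1
        rw [if_pos rfl, if_pos rfl, if_neg, add_zero]
        exact fun h2 => hlt e h2
      · rw [if_neg h1, if_neg h1, zero_add]
    simp only [step, Finset.sum_add_distrib, Finset.sum_ite_eq' Finset.univ,
      Finset.mem_univ, if_true]
    ring
  · simp only [Matrix.of_apply, h, Sum.elim_inr]
    have step : ∀ a : Fin n, (((a, i) : Fin n × Fin k) = (u, j)) ↔ (a = u ∧ i = j) := by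
      intro a; rw [Prod.ext_iff]
    simp only [step]
    by_cases hij : i = j
    · subst hij
      simp
    · simp [hij, Ne.symm hij, Prod.ext_iff]

lemma mul_C (tail head : E → Fin n) (hlt : ∀ e, tail e ≠ head e) (u v : Fin n)
    (σ : (E ⊕ Fin k) ≃ (Fin n × Fin k)) :
    Mat tail head u σ * C n k E u v = Mat tail head v σ := by
  refine Matrix.ext fun r c => ?_
  rw [Matrix.mul_apply]
  have expand : ∀ j : Fin n × Fin k,
      Mat tail head u σ r j * C n k E u v j c =
        (if j = c then Mat tail head u σ r j else 0) +
        ((if j.2 = c.2 ∧ c.1 = v then Mat tail head u σ r j else 0) -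
         (if j.2 = c.2 ∧ c.1 = u then Mat tail head u σ r j else 0)) := by
    intro j
    unfold C
    simp only [Matrix.of_apply, mul_add, mul_sub, mul_ite, mul_one, mul_zero]
  rw [Finset.sum_congr rfl fun j _ => expand j]
  rw [Finset.sum_add_distrib, Finset.sum_sub_distrib,
    Finset.sum_ite_eq' Finset.univ c, if_pos (Finset.mem_univ c)]
  have blocksum : ∀ w : Fin n,
      (∑ j : Fin n × Fin k, if j.2 = c.2 ∧ c.1 = w then Mat tail head u σ r j else 0) =
      (if c.1 = w then
        Sum.elim (fun _ => (0 : MvPolynomial (E × Fin k) ℝ))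
          (fun j => if (u, j) = ((u, c.2) : Fin n × Fin k) then 1 else 0) (σ.symm r)
        else 0) := by
    intro w
    by_cases hw : c.1 = w
    · rw [if_pos hw, ← rowsum tail head hlt u σ r c.2, Fintype.sum_prod_type]
      refine Finset.sum_congr rfl fun a _ => ?_
      simp [hw]
    · simp [hw]
  rw [blocksum v, blocksum u]
  unfold Mat
  rcases h : σ.symm r with e | j
  · simp only [Matrix.of_apply, h, Sum.elim_inl]
    by_cases hv : c.1 = v <;> by_cases hu : c.1 = u <;> simp [hv, hu]
  · simp only [Matrix.of_apply, h, Sum.elim_inr]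
    by_cases hj : j = c.2
    · subst hj
      have h1 : (c = ((u, c.2) : Fin n × Fin k)) ↔ c.1 = u := by
        rw [Prod.ext_iff]; simp
      have h2 : (c = ((v, c.2) : Fin n × Fin k)) ↔ c.1 = v := by
        rw [Prod.ext_iff]; simp
      rw [if_pos rfl]
      by_cases hu : c.1 = u <;> by_cases hv : c.1 = v <;>
        simp only [h1, h2, hu, hv, if_true, if_false] <;> (try simp) <;> (try ring)
    · have h1 : ¬(c = ((u, j) : Fin n × Fin k)) := by
        rw [Prod.ext_iff]; exact fun hc => hj hc.2.symm
      have h2 : ¬(c = ((v, j) : Fin n × Fin k)) := by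
        rw [Prod.ext_iff]; exact fun hc => hj hc.2.symm
      have h3 : ¬(((u, j) : Fin n × Fin k) = (u, c.2)) := by
        rw [Prod.ext_iff]; exact fun hc => hj hc.2
      rw [if_neg h1, if_neg h2, if_neg h3]
      by_cases hu : c.1 = u <;> by_cases hv : c.1 = v <;>
        simp only [hu, hv, if_true, if_false] <;> (try simp) <;> (try ring)


lemma pure_eq (tail head : E → Fin n) (u : Fin n)
    (σ : (E ⊕ Fin k) ≃ (Fin n × Fin k)) :
    pureCondBar k tail head id u σ = (Mat tail head u σ).det := by
  unfold pureCondBar pureCond Mat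
  congr 1

end Stmt7Aux

/-- the vanishing of the pure condition is independent of the choice of
the tie-down vertex. -/
theorem stmt7 {n : ℕ} {E : Type} [Fintype E] [DecidableEq E] (k : ℕ) (hk : 1 ≤ k)
    (tail head : E → Fin n) (hlt : ∀ e, tail e < head e)
    (hE : Fintype.card E = k * n - k)
    (u v : Fin n) (σ : (E ⊕ Fin k) ≃ (Fin n × Fin k)) :
    pureCondBar k tail head id u σ = 0 ↔ pureCondBar k tail head id v σ = 0 := by
  have key : ∀ a b : Fin n,
      pureCondBar k tail head id a σ = 0 → pureCondBar k tail head id b σ = 0 := by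
    intro a b h
    have hne : ∀ e, tail e ≠ head e := fun e => (hlt e).ne
    rw [Stmt7Aux.pure_eq] at h ⊢
    rw [← Stmt7Aux.mul_C tail head hne a b σ, Matrix.det_mul, h, zero_mul]
  exact ⟨key u v, key v u⟩
end

section
/- Let G be a bicolored multigraph on n vertices, let a, b be positive integers with k = a + b, suppose |E| = k·n − k, and let u and v be two vertices of G. Then the pure condition of the generic [a,b]-frame with standard tie-down at u is the zero polynomial if and only if the pure condition with standard tie-down at v is the zero polynomial; i.e., the vanishing of the pure condition is independent of the choice of tie-down vertex. -/
open MvPolynomial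

private lemma sum_pair_zero {α : Type*} [Fintype α] [DecidableEq α] {R : Type*}
    [Ring R] (t h : α) (hth : t ≠ h) (x : R) :
    ∑ w : α, (if w = t then x else if w = h then -x else 0) = 0 := by
  have key : ∀ w : α, (if w = t then x else if w = h then -x else 0)
      = (if w = t then x else 0) + (if w = h then -x else 0) := by
    intro w
    by_cases h1 : w = t
    · subst h1; simp [if_neg (Ne.symm hth), hth]
    · simp [h1]
  simp [key, Finset.sum_add_distrib, Finset.sum_ite_eq']

private lemma key_lemma {n : ℕ} {E : Type} [Fintype E] [DecidableEq E]
    (tail head : E → Fin n) (hlt : ∀ e, tail e < head e)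
    (red : E → Bool) (a k : ℕ) (u : Fin n)
    (σ : (E ⊕ Fin k) ≃ (Fin n × Fin k)) :
    pureCond k a tail head red id u σ = 0 ↔
      ∃ c : E → MvPolynomial (E × Fin k) ℝ, c ≠ 0 ∧
        ∀ p : Fin n × Fin k, ∑ e : E, c e *
          (if red e = true ∧ a ≤ (p.2 : ℕ) then 0
           else if p.1 = tail e then X (e, p.2)
           else if p.1 = head e then -X (e, p.2) else 0) = 0 := by
  classical
  set S := MvPolynomial (E × Fin k) ℝ
  -- the edge rows and tie rows
  set B : (E ⊕ Fin k) → (Fin n × Fin k) → S := fun s c =>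
    Sum.elim
      (fun e =>
        if red e = true ∧ a ≤ (c.2 : ℕ) then 0
        else if c.1 = tail e then (X (e, c.2) : S)
        else if c.1 = head e then -X (e, c.2)
        else 0)
      (fun i => if c = (u, i) then 1 else 0) s with hB
  set A : Matrix (Fin n × Fin k) (Fin n × Fin k) S :=
    Matrix.of (fun r c => B (σ.symm r) c) with hA
  have h1 : pureCond k a tail head red id u σ = A.det := rfl
  rw [h1, ← Matrix.exists_vecMul_eq_zero_iff]
  constructor
  · rintro ⟨v, hv0, hv⟩
    have hsum : ∀ p : Fin n × Fin k,
        (∑ e : E, v (σ (Sum.inl e)) * B (Sum.inl e) p)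
          + (∑ i : Fin k, v (σ (Sum.inr i)) * B (Sum.inr i) p) = 0 := by
      intro p
      have h := congrFun hv p
      simp only [Matrix.vecMul, dotProduct, Pi.zero_apply, hA, Matrix.of_apply] at h
      have hsplit := Fintype.sum_sum_type (fun s : E ⊕ Fin k => v (σ s) * B s p)
      rw [← hsplit, ← h]
      exact Fintype.sum_equiv σ _ _ (fun s => by simp)
    -- tie coefficients vanish
    have hd : ∀ i : Fin k, v (σ (Sum.inr i)) = 0 := by
      intro i
      have h0 : ∑ w : Fin n,
          ((∑ e : E, v (σ (Sum.inl e)) * B (Sum.inl e) (w, i))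
            + (∑ j : Fin k, v (σ (Sum.inr j)) * B (Sum.inr j) (w, i))) = 0 := by
        simp [fun w => hsum (w, i)]
      have hedge : ∀ e : E, ∑ w : Fin n, v (σ (Sum.inl e)) * B (Sum.inl e) (w, i) = 0 := by
        intro e
        rw [← Finset.mul_sum]
        by_cases hre : red e = true ∧ a ≤ (i : ℕ)
        · simp [hB, hre]
        · have : ∑ w : Fin n, B (Sum.inl e) (w, i) = 0 := by
            simp only [hB, Sum.elim_inl, hre, if_false]
            exact sum_pair_zero (tail e) (head e) (hlt e).ne (X (e, i))
          rw [this, mul_zero]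
      have htie : ∀ j : Fin k, ∑ w : Fin n, v (σ (Sum.inr j)) * B (Sum.inr j) (w, i)
          = if j = i then v (σ (Sum.inr j)) else 0 := by
        intro j
        rw [← Finset.mul_sum]
        have : ∑ w : Fin n, B (Sum.inr j) (w, i) = if j = i then 1 else 0 := by
          simp only [hB, Sum.elim_inr, Prod.mk.injEq]
          by_cases hij : i = j
          · subst hij; simp [Finset.sum_ite_eq']
          · rw [if_neg (fun h => hij h.symm)]
            exact Finset.sum_eq_zero fun w _ => if_neg (fun h => hij h.2)
        rw [this]
        by_cases hij : j = i <;> simp [hij]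
      have t1 : ∑ w : Fin n, ∑ e : E, v (σ (Sum.inl e)) * B (Sum.inl e) (w, i) = 0 := by
        rw [Finset.sum_comm]
        exact Finset.sum_eq_zero (fun e _ => hedge e)
      have t2 : ∑ w : Fin n, ∑ j : Fin k, v (σ (Sum.inr j)) * B (Sum.inr j) (w, i)
          = v (σ (Sum.inr i)) := by
        rw [Finset.sum_comm]
        simp [htie, Finset.sum_ite_eq']
      rw [Finset.sum_add_distrib, t1, t2] at h0
      simpa using h0
    refine ⟨fun e => v (σ (Sum.inl e)), ?_, ?_⟩
    · intro hc
      apply hv0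
      funext r
      have : r = σ (σ.symm r) := (σ.apply_symm_apply r).symm
      rw [this]
      cases hs : σ.symm r with
      | inl e => exact congrFun hc e
      | inr i => exact hd i
    · intro p
      have := hsum p
      simp only [hd, zero_mul, Finset.sum_const_zero, add_zero] at this
      simpa [hB] using this
  · rintro ⟨c, hc0, hc⟩
    refine ⟨fun r => Sum.elim c (fun _ => 0) (σ.symm r), ?_, ?_⟩
    · obtain ⟨e, he⟩ := Function.ne_iff.mp hc0
      intro h
      apply he
      have := congrFun h (σ (Sum.inl e))
      simpa using this
    · funext p
      simp only [Matrix.vecMul, dotProduct, Pi.zero_apply, hA, Matrix.of_apply]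
      rw [Fintype.sum_equiv σ.symm _
        (fun s => Sum.elim c (fun _ => 0) s * B s p) (fun r => rfl)]
      rw [Fintype.sum_sum_type]
      simp only [Sum.elim_inl, Sum.elim_inr, zero_mul, Finset.sum_const_zero, add_zero]
      simpa [hB] using hc p

/-- the vanishing of the pure condition of a generic `[a,b]`-frame is
independent of the choice of the tie-down vertex. -/
theorem stmt9 {n : ℕ} {E : Type} [Fintype E] [DecidableEq E]
    (tail head : E → Fin n) (hlt : ∀ e, tail e < head e)
    (red : E → Bool) (a b : ℕ) (ha : 0 < a) (hb : 0 < b)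
    (hE : Fintype.card E = (a + b) * n - (a + b))
    (u v : Fin n) (σ : (E ⊕ Fin (a + b)) ≃ (Fin n × Fin (a + b))) :
    pureCond (a + b) a tail head red id u σ = 0 ↔
      pureCond (a + b) a tail head red id v σ = 0 :=
  (key_lemma tail head hlt red a (a + b) u σ).trans
    (key_lemma tail head hlt red a (a + b) v σ).symm
end

section
/- Let G be an [a,b]-graph on n vertices (a, b positive integers, k = a + b), and let W be a vertex subset with 2 ≤ |W| < n whose induced multigraph is, as an uncolored multigraph, (k,k)-tight. Let u be a vertex not in W and let w ∈ W. Then there exists ε ∈ {1, −1} such that C_G = ε · C_{G/H} · C_H, where C_G is the pure condition of G with standard tie-down at u, C_H is the pure condition of the induced bicolored multigraph on W with standard tie-down at w (computed in S using the variables X_(e,i) for edges e induced by W), and C_{G/H} is the pure condition of the contraction G/H with standard tie-down at the image of u (computed in S using the variables X_(e,i) for edges e not induced by W). -/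
open MvPolynomial

/-! ### Auxiliary material for `stmt11` -/

open Matrix in
private lemma st11.det_subm_sign {R : Type*} [CommRing R] {ρ ι : Type*} [Fintype ι]
    [DecidableEq ι] (N : Matrix ρ ι R) (f g : ι ≃ ρ) :
    ∃ ε : R, (ε = 1 ∨ ε = -1) ∧
      (N.submatrix f id).det = ε * (N.submatrix g id).det := by
  refine ⟨((Equiv.Perm.sign (f.trans g.symm) : ℤ) : R), ?_, ?_⟩
  · rcases Int.units_eq_one_or (Equiv.Perm.sign (f.trans g.symm)) with h | h <;> simp [h]
  · have : N.submatrix f id = (N.submatrix g id).submatrix (f.trans g.symm) id := by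
      ext r c; simp
    rw [this, Matrix.det_permute]

open Matrix in
private lemma st11.det_block_fact₁₂ {R : Type*} [CommRing R] {ρ₁ ρ₂ ι₁ ι₂ : Type*}
    [Fintype ρ₁] [Fintype ρ₂] [Fintype ι₁] [Fintype ι₂]
    [DecidableEq ρ₁] [DecidableEq ρ₂] [DecidableEq ι₁] [DecidableEq ι₂]
    (N : Matrix (ρ₁ ⊕ ρ₂) (ι₁ ⊕ ι₂) R) (φ : (ι₁ ⊕ ι₂) ≃ (ρ₁ ⊕ ρ₂))
    (e₁ : ρ₁ ≃ ι₁) (e₂ : ρ₂ ≃ ι₂)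
    (hz : ∀ r c, N (Sum.inl r) (Sum.inr c) = 0) :
    ∃ ε : R, (ε = 1 ∨ ε = -1) ∧
      (N.submatrix φ id).det =
        ε * ((Matrix.of fun i j : ι₁ => N (Sum.inl (e₁.symm i)) (Sum.inl j)).det *
             (Matrix.of fun i j : ι₂ => N (Sum.inr (e₂.symm i)) (Sum.inr j)).det) := by
  set ψ : (ρ₁ ⊕ ρ₂) ≃ (ι₁ ⊕ ι₂) := Equiv.sumCongr e₁ e₂ with hψ
  have h1 : N.submatrix φ id = (N.submatrix ψ.symm id).submatrix (φ.trans ψ) id := by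
    ext r c; simp
  have h2 : N.submatrix ψ.symm id =
      Matrix.fromBlocks
        (Matrix.of fun i j : ι₁ => N (Sum.inl (e₁.symm i)) (Sum.inl j))
        0
        (Matrix.of fun (i : ι₂) (j : ι₁) => N (Sum.inr (e₂.symm i)) (Sum.inl j))
        (Matrix.of fun i j : ι₂ => N (Sum.inr (e₂.symm i)) (Sum.inr j)) := by
    ext r c
    rcases r with r | r <;> rcases c with c | c <;>
      simp [hψ, Matrix.fromBlocks, hz]
  refine ⟨((Equiv.Perm.sign (φ.trans ψ) : ℤ) : R), ?_, ?_⟩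
  · rcases Int.units_eq_one_or (Equiv.Perm.sign (φ.trans ψ)) with h | h <;> simp [h]
  · rw [h1, Matrix.det_permute, h2, Matrix.det_fromBlocks_zero₁₂]

open Matrix in
private lemma st11.det_block_fact₂₁ {R : Type*} [CommRing R] {ρ₁ ρ₂ ι₁ ι₂ : Type*}
    [Fintype ρ₁] [Fintype ρ₂] [Fintype ι₁] [Fintype ι₂]
    [DecidableEq ρ₁] [DecidableEq ρ₂] [DecidableEq ι₁] [DecidableEq ι₂]
    (N : Matrix (ρ₁ ⊕ ρ₂) (ι₁ ⊕ ι₂) R) (φ : (ι₁ ⊕ ι₂) ≃ (ρ₁ ⊕ ρ₂))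
    (e₁ : ρ₁ ≃ ι₁) (e₂ : ρ₂ ≃ ι₂)
    (hz : ∀ r c, N (Sum.inr r) (Sum.inl c) = 0) :
    ∃ ε : R, (ε = 1 ∨ ε = -1) ∧
      (N.submatrix φ id).det =
        ε * ((Matrix.of fun i j : ι₁ => N (Sum.inl (e₁.symm i)) (Sum.inl j)).det *
             (Matrix.of fun i j : ι₂ => N (Sum.inr (e₂.symm i)) (Sum.inr j)).det) := by
  set ψ : (ρ₁ ⊕ ρ₂) ≃ (ι₁ ⊕ ι₂) := Equiv.sumCongr e₁ e₂ with hψ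
  have h1 : N.submatrix φ id = (N.submatrix ψ.symm id).submatrix (φ.trans ψ) id := by
    ext r c; simp
  have h2 : N.submatrix ψ.symm id =
      Matrix.fromBlocks
        (Matrix.of fun i j : ι₁ => N (Sum.inl (e₁.symm i)) (Sum.inl j))
        (Matrix.of fun (i : ι₁) (j : ι₂) => N (Sum.inl (e₁.symm i)) (Sum.inr j))
        0
        (Matrix.of fun i j : ι₂ => N (Sum.inr (e₂.symm i)) (Sum.inr j)) := by
    ext r c
    rcases r with r | r <;> rcases c with c | c <;>
      simp [hψ, Matrix.fromBlocks, hz]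
  refine ⟨((Equiv.Perm.sign (φ.trans ψ) : ℤ) : R), ?_, ?_⟩
  · rcases Int.units_eq_one_or (Equiv.Perm.sign (φ.trans ψ)) with h | h <;> simp [h]
  · rw [h1, Matrix.det_permute, h2, Matrix.det_fromBlocks_zero₂₁]

private def st11.eCdef {n : ℕ} (W : Finset (Fin n)) (w : Fin n) (hw : w ∈ W) (κ : Type) :
    (({x : {v : Fin n // v ∈ W} // x ≠ ⟨w, hw⟩} × κ) ⊕ (ContrV n W × κ)) ≃ (Fin n × κ) where
  toFun := Sum.elim (fun x => (x.1.1.1, x.2))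
    (fun x => (Sum.elim (fun v => v.1) (fun _ => w) x.1, x.2))
  invFun := fun c => if h : c.1 ∈ W then
      (if h2 : c.1 = w then Sum.inr (Sum.inr (), c.2)
       else Sum.inl (⟨⟨c.1, h⟩, fun hc => h2 (congrArg Subtype.val hc)⟩, c.2))
    else Sum.inr (Sum.inl ⟨c.1, h⟩, c.2)
  left_inv := by
    rintro (⟨⟨⟨v, hv⟩, hvw⟩, i⟩ | ⟨v | ⟨⟩, i⟩)
    · have hvw' : ¬ v = w := fun h => hvw (Subtype.ext h)
      simp [hv, hvw']
    · simp [v.2]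
    · simp [hw]
  right_inv := by
    rintro ⟨v, i⟩
    by_cases h : v ∈ W
    · by_cases h2 : v = w
      · subst h2; simp [hw]
      · simp [h, h2]
    · simp [h]

private def st11.eCHdef {n : ℕ} (W : Finset (Fin n)) (w : Fin n) (hw : w ∈ W) (κ : Type) :
    (({x : {v : Fin n // v ∈ W} // x ≠ ⟨w, hw⟩} × κ) ⊕ κ) ≃ ({v : Fin n // v ∈ W} × κ) where
  toFun := Sum.elim (fun x => (x.1.1, x.2)) (fun i => (⟨w, hw⟩, i))
  invFun := fun c => if h : c.1 = ⟨w, hw⟩ then Sum.inr c.2 else Sum.inl (⟨c.1, h⟩, c.2)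
  left_inv := by
    rintro (⟨x, i⟩ | i)
    · simp [x.2]
    · simp
  right_inv := by
    rintro ⟨v, i⟩
    by_cases h : v = ⟨w, hw⟩ <;> simp [h]

private def st11.eEdef {E : Type} (p : E → Prop) [DecidablePred p] (κ : Type) :
    ({e : E // p e} ⊕ ({e : E // ¬ p e} ⊕ κ)) ≃ (E ⊕ κ) where
  toFun := Sum.elim (fun e => Sum.inl e.1) (Sum.elim (fun e => Sum.inl e.1) Sum.inr)
  invFun := Sum.elim
    (fun e => if h : p e then Sum.inl ⟨e, h⟩ else Sum.inr (Sum.inl ⟨e, h⟩))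
    (fun i => Sum.inr (Sum.inr i))
  left_inv := by
    rintro (e | (e | i))
    · simp [e.2]
    · simp [e.2]
    · simp
  right_inv := by
    rintro (e | i)
    · by_cases h : p e <;> simp [h]
    · simp

private lemma st11.contrMap_eq_inl {n : ℕ} {W : Finset (Fin n)} (v : {v : Fin n // v ∉ W})
    (t : Fin n) : (Sum.inl v = contrMap W t) ↔ v.1 = t := by
  unfold contrMap
  by_cases h : t ∈ W
  · simp only [dif_pos h]
    constructor
    · intro hc; exact absurd hc (by simp)
    · intro hc; exact absurd (hc ▸ h) v.2
  · simp [dif_neg h, Subtype.ext_iff]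

private lemma st11.contrMap_eq_inr {n : ℕ} {W : Finset (Fin n)} (t : Fin n) (y : Unit) :
    (Sum.inr y = contrMap W t) ↔ t ∈ W := by
  unfold contrMap
  by_cases h : t ∈ W <;> simp [h]

private def st11.Tmat {n : ℕ} (W : Finset (Fin n)) (w : Fin n) (κ : Type) [DecidableEq κ]
    (R : Type) [CommRing R] : Matrix (Fin n × κ) (Fin n × κ) R :=
  Matrix.of fun c d => if c = d then 1 else if d.1 = w ∧ c.2 = d.2 ∧ c.1 ∈ W then 1 else 0

private lemma st11.det_Tmat {n : ℕ} {κ : Type} [DecidableEq κ] {R : Type} [CommRing R]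
    [Fintype κ] (W : Finset (Fin n)) (w : Fin n) : (st11.Tmat W w κ R).det = 1 := by
  classical
  rw [← Matrix.det_submatrix_equiv_self (Equiv.sumCompl (fun x : Fin n × κ => x.1 = w))]
  have : (st11.Tmat W w κ R).submatrix (Equiv.sumCompl (fun x : Fin n × κ => x.1 = w))
      (Equiv.sumCompl (fun x : Fin n × κ => x.1 = w)) =
      Matrix.fromBlocks 1 0
        (Matrix.of fun (r : {x : Fin n × κ // ¬ x.1 = w}) (c : {x : Fin n × κ // x.1 = w}) =>
          st11.Tmat W w κ R r.1 c.1) 1 := by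
    ext r c
    rcases r with r | r <;> rcases c with c | c <;>
      simp only [Matrix.submatrix_apply, Equiv.sumCompl_apply_inl, Equiv.sumCompl_apply_inr,
        Matrix.fromBlocks_apply₁₁, Matrix.fromBlocks_apply₁₂, Matrix.fromBlocks_apply₂₁,
        Matrix.fromBlocks_apply₂₂]
    · by_cases hrc : r = c
      · subst hrc; simp [st11.Tmat]
      · have h1 : ¬ r.1 = c.1 := fun h => hrc (Subtype.ext h)
        have h2 : ¬ (c.1.1 = w ∧ r.1.2 = c.1.2 ∧ r.1.1 ∈ W) := by
          rintro ⟨ha1, ha2, _⟩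
          exact h1 (Prod.ext (by rw [r.2, c.2]) ha2)
        simp [st11.Tmat, h1, h2, Matrix.one_apply, hrc]
    · have h1 : ¬ r.1 = c.1 := fun h => c.2 (h ▸ r.2)
      have h2 : ¬ c.1.1 = w := c.2
      simp [st11.Tmat, h1, h2]
    · simp [st11.Tmat, Matrix.fromBlocks]
    · by_cases hrc : r = c
      · subst hrc; simp [st11.Tmat]
      · have h1 : ¬ r.1 = c.1 := fun h => hrc (Subtype.ext h)
        have h2 : ¬ c.1.1 = w := c.2
        simp [st11.Tmat, h1, h2, Matrix.one_apply, hrc]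
  rw [this, Matrix.det_fromBlocks_zero₁₂]
  simp

private def st11.colOp {n : ℕ} {κ : Type} {R : Type} [CommRing R] {ρ : Type}
    (W : Finset (Fin n)) (w : Fin n) (M : Matrix ρ (Fin n × κ) R) [DecidableEq (Fin n)] :
    Matrix ρ (Fin n × κ) R :=
  Matrix.of fun r d => if d.1 = w then ∑ v ∈ W, M r (v, d.2) else M r d

private lemma st11.mul_Tmat {n : ℕ} {κ : Type} [DecidableEq κ] {R : Type} [CommRing R]
    {ρ : Type} [Fintype κ] (W : Finset (Fin n)) (w : Fin n) (hw : w ∈ W)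
    (M : Matrix ρ (Fin n × κ) R) : M * st11.Tmat W w κ R = st11.colOp W w M := by
  classical
  ext r d
  rw [Matrix.mul_apply]
  by_cases hd : d.1 = w
  · have hT : ∀ c : Fin n × κ, st11.Tmat W w κ R c d = if c.1 ∈ W ∧ c.2 = d.2 then 1 else 0 := by
      intro c
      by_cases hc : c = d
      · subst hc; simp [st11.Tmat, hd, hw]
      · simp only [st11.Tmat, Matrix.of_apply, if_neg hc]
        by_cases h1 : c.1 ∈ W ∧ c.2 = d.2
        · simp [hd, h1.1, h1.2]
        · have : ¬ (d.1 = w ∧ c.2 = d.2 ∧ c.1 ∈ W) := by tauto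
          simp [this, h1]
    have hsum : ∀ c : Fin n × κ, M r c * st11.Tmat W w κ R c d =
        if c.1 ∈ W ∧ c.2 = d.2 then M r (c.1, d.2) else 0 := by
      intro c
      rw [hT c]
      by_cases h : c.1 ∈ W ∧ c.2 = d.2
      · rw [if_pos h, if_pos h, mul_one, ← h.2]
      · rw [if_neg h, if_neg h, mul_zero]
    rw [Finset.sum_congr rfl fun c _ => hsum c, Fintype.sum_prod_type]
    have hinner : ∀ v : Fin n, (∑ j : κ, if v ∈ W ∧ j = d.2 then M r (v, d.2) else 0)
        = if v ∈ W then M r (v, d.2) else 0 := by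
      intro v
      by_cases hv : v ∈ W <;> simp [hv]
    rw [Finset.sum_congr rfl fun v _ => hinner v]
    simp [st11.colOp, hd, Finset.sum_ite_mem]
  · have hT : ∀ c : Fin n × κ, st11.Tmat W w κ R c d = if c = d then 1 else 0 := by
      intro c
      simp only [st11.Tmat, Matrix.of_apply]
      have : ¬ (d.1 = w ∧ c.2 = d.2 ∧ c.1 ∈ W) := fun h => hd h.1
      rw [if_neg this]
    rw [Finset.sum_congr rfl fun c _ => by rw [hT c]]
    simp [st11.colOp, hd]

/-- The (tied-down) generic rigidity matrix, as a rectangular matrix. -/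
private noncomputable def st11.pureMat (E : Type) {E' V : Type} [DecidableEq V] (k a : ℕ)
    (tail head : E' → V) (red : E' → Bool) (var : E' → E) (u : V) :
    Matrix (E' ⊕ Fin k) (V × Fin k) (MvPolynomial (E × Fin k) ℝ) :=
  Matrix.of fun r c =>
    Sum.elim
      (fun e =>
        if red e = true ∧ a ≤ (c.2 : ℕ) then 0
        else if c.1 = tail e then (X (var e, c.2) : MvPolynomial (E × Fin k) ℝ)
        else if c.1 = head e then -X (var e, c.2)
        else 0)
      (fun i => if c = (u, i) then 1 else 0)
      r

private lemma st11.pureCond_eq {E E' V : Type} [Fintype V] [DecidableEq V] (k a : ℕ)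
    (tail head : E' → V) (red : E' → Bool) (var : E' → E) (u : V)
    (σ : (E' ⊕ Fin k) ≃ (V × Fin k)) :
    pureCond k a tail head red var u σ =
      ((st11.pureMat E k a tail head red var u).submatrix σ.symm id).det := rfl

private lemma st11.sum_entries {n : ℕ} {E : Type} (tail head : E → Fin n)
    (a : ℕ) {k : ℕ} (W : Finset (Fin n)) (e : E) (i : Fin k) (red : E → Bool)
    (he : tail e ≠ head e) :
    (∑ v ∈ W, (if red e = true ∧ a ≤ (i : ℕ) then 0
      else if v = tail e then (X (e, i) : MvPolynomial (E × Fin k) ℝ)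
      else if v = head e then -X (e, i) else 0))
    = if red e = true ∧ a ≤ (i : ℕ) then 0
      else ((if tail e ∈ W then (X (e, i) : MvPolynomial (E × Fin k) ℝ) else 0) +
            (if head e ∈ W then -X (e, i) else 0)) := by
  classical
  by_cases hr : red e = true ∧ a ≤ (i : ℕ)
  · simp [hr]
  · simp only [if_neg hr]
    have hpt : ∀ v ∈ W, (if v = tail e then (X (e, i) : MvPolynomial (E × Fin k) ℝ)
        else if v = head e then -X (e, i) else 0)
        = (if v = tail e then (X (e, i) : MvPolynomial (E × Fin k) ℝ) else 0) +
          (if v = head e then -X (e, i) else 0) := by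
      intro v _
      by_cases h1 : v = tail e
      · have h2 : ¬ v = head e := fun h => he (h1 ▸ h)
        simp [h1, h2, he]
      · simp [h1]
    rw [Finset.sum_congr rfl hpt, Finset.sum_add_distrib]
    congr 1 <;> rw [Finset.sum_ite_eq' W]

/-- if `W` is a vertex set of an `[a,b]`-graph `G` whose induced
multigraph is, as an uncolored multigraph, `(k,k)`-tight (`k = a + b`), then the pure
condition factors, up to sign, as `C_G = ± C_{G/H} · C_H`. -/
theorem stmt11 {n : ℕ} {E : Type} [Fintype E] [DecidableEq E]
    (tail head : E → Fin n) (hlt : ∀ e, tail e < head e)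
    (red : E → Bool) (a b : ℕ) (ha : 0 < a) (hb : 0 < b)
    (hsparse : ABSparseOn tail head red a b (Finset.univ : Finset E))
    (hE : Fintype.card E = (a + b) * n - (a + b))
    (W : Finset (Fin n)) (hblock : IsProperBlock tail head (a + b) W)
    (u : Fin n) (hu : u ∉ W) (w : Fin n) (hw : w ∈ W)
    (σG : (E ⊕ Fin (a + b)) ≃ (Fin n × Fin (a + b)))
    (σH : ({e : E // tail e ∈ W ∧ head e ∈ W} ⊕ Fin (a + b)) ≃
      ({v : Fin n // v ∈ W} × Fin (a + b)))
    (σQ : ({e : E // ¬(tail e ∈ W ∧ head e ∈ W)} ⊕ Fin (a + b)) ≃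
      (ContrV n W × Fin (a + b))) :
    ∃ ε : ℝ, (ε = 1 ∨ ε = -1) ∧
      pureCond (a + b) a tail head red id u σG =
        C ε *
          (pureCond (a + b) a
              (fun e : {e : E // ¬(tail e ∈ W ∧ head e ∈ W)} => contrMap W (tail e.1))
              (fun e => contrMap W (head e.1))
              (fun e => red e.1) (fun e => e.1) (contrMap W u) σQ *
            pureCond (a + b) a
              (fun e : {e : E // tail e ∈ W ∧ head e ∈ W} =>
                (⟨tail e.1, e.2.1⟩ : {v : Fin n // v ∈ W}))
              (fun e => (⟨head e.1, e.2.2⟩ : {v : Fin n // v ∈ W}))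
              (fun e => red e.1) (fun e => e.1) ⟨w, hw⟩ σH) := by
  classical
  obtain ⟨hW2, hWn, hsub, hcard⟩ := hblock
  have hne : ∀ e : E, tail e ≠ head e := fun e => ne_of_lt (hlt e)
  -- cardinality: induced edges ↔ interior columns
  have hcardEq : Fintype.card {e : E // tail e ∈ W ∧ head e ∈ W}
      = Fintype.card ({x : {v : Fin n // v ∈ W} // x ≠ (⟨w, hw⟩ : {v : Fin n // v ∈ W})}
          × Fin (a + b)) := by
    have hWV : Fintype.card {v : Fin n // v ∈ W} = W.card := by
      simp [Fintype.card_subtype]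
    have h1 : Fintype.card {e : E // tail e ∈ W ∧ head e ∈ W}
        = (Finset.univ.filter fun e => tail e ∈ W ∧ head e ∈ W).card := by
      rw [Fintype.card_subtype]
    have h2 : Fintype.card {x : {v : Fin n // v ∈ W} // x ≠ (⟨w, hw⟩ : {v : Fin n // v ∈ W})}
        = W.card - 1 := by
      have := Fintype.card_subtype_compl (fun x : {v : Fin n // v ∈ W} => x = ⟨w, hw⟩)
      rw [Fintype.card_subtype_eq, hWV] at this
      exact this
    rw [h1, Fintype.card_prod, Fintype.card_fin, h2]
    have hW1 : 1 ≤ W.card := le_trans one_le_two hW2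
    have hcard' := hcard
    zify [hW1]
    push_cast at hcard' ⊢
    linear_combination hcard'
  obtain e₁ := Fintype.equivOfCardEq hcardEq
  -- the matrices and index equivalences
  set MG := st11.pureMat E (a + b) a tail head red id u with hMG
  set MQ := st11.pureMat E (a + b) a
      (fun e : {e : E // ¬(tail e ∈ W ∧ head e ∈ W)} => contrMap W (tail e.1))
      (fun e => contrMap W (head e.1)) (fun e => red e.1) (fun e => e.1)
      (contrMap W u) with hMQ
  set MH := st11.pureMat E (a + b) a
      (fun e : {e : E // tail e ∈ W ∧ head e ∈ W} =>
        (⟨tail e.1, e.2.1⟩ : {v : Fin n // v ∈ W}))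
      (fun e => (⟨head e.1, e.2.2⟩ : {v : Fin n // v ∈ W}))
      (fun e => red e.1) (fun e => e.1) (⟨w, hw⟩ : {v : Fin n // v ∈ W}) with hMH
  set eC := st11.eCdef W w hw (Fin (a + b)) with heC
  set eCH := st11.eCHdef W w hw (Fin (a + b)) with heCH
  set eE := st11.eEdef (fun e : E => tail e ∈ W ∧ head e ∈ W) (Fin (a + b)) with heE
  set N := (st11.colOp W w MG).submatrix (⇑eE) (⇑eC) with hN
  set NH := MH.submatrix id (⇑eCH) with hNH
  set φ := (eC.trans σG.symm).trans eE.symm with hφ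
  set φH := eCH.trans σH.symm with hφH
  have hG := st11.pureCond_eq (a + b) a tail head red id u σG
  rw [← hMG] at hG
  have hQQ := st11.pureCond_eq (a + b) a
      (fun e : {e : E // ¬(tail e ∈ W ∧ head e ∈ W)} => contrMap W (tail e.1))
      (fun e => contrMap W (head e.1)) (fun e => red e.1) (fun e => e.1)
      (contrMap W u) σQ
  rw [← hMQ] at hQQ
  have hHH := st11.pureCond_eq (a + b) a
      (fun e : {e : E // tail e ∈ W ∧ head e ∈ W} =>
        (⟨tail e.1, e.2.1⟩ : {v : Fin n // v ∈ W}))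
      (fun e => (⟨head e.1, e.2.2⟩ : {v : Fin n // v ∈ W}))
      (fun e => red e.1) (fun e => e.1) (⟨w, hw⟩ : {v : Fin n // v ∈ W}) σH
  rw [← hMH] at hHH
  -- Step 1 : column operation
  have hmul : (MG.submatrix (⇑σG.symm) id) *
      st11.Tmat W w (Fin (a + b)) (MvPolynomial (E × Fin (a + b)) ℝ)
      = (st11.colOp W w MG).submatrix (⇑σG.symm) id := by
    rw [st11.mul_Tmat W w hw]
    ext r d
    by_cases hd : d.1 = w <;> simp [st11.colOp, hd]
  have h1 : (MG.submatrix (⇑σG.symm) id).det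
      = ((st11.colOp W w MG).submatrix (⇑σG.symm) id).det := by
    calc (MG.submatrix (⇑σG.symm) id).det
        = ((MG.submatrix (⇑σG.symm) id) *
            st11.Tmat W w (Fin (a + b)) (MvPolynomial (E × Fin (a + b)) ℝ)).det := by
          rw [Matrix.det_mul, st11.det_Tmat, mul_one]
      _ = _ := by rw [hmul]
  -- Step 2 : reindex
  have h2 : ((st11.colOp W w MG).submatrix (⇑σG.symm) id).det = (N.submatrix (⇑φ) id).det := by
    rw [← Matrix.det_submatrix_equiv_self eC ((st11.colOp W w MG).submatrix (⇑σG.symm) id)]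
    congr 1
    ext r c
    simp [hN, hφ, Matrix.submatrix_apply, Equiv.apply_symm_apply]
  -- Step 3 : zero block
  have hz : ∀ (r : {e : E // tail e ∈ W ∧ head e ∈ W}) (c : ContrV n W × Fin (a + b)),
      N (Sum.inl r) (Sum.inr c) = 0 := by
    rintro r ⟨cv | y, j⟩
    · have hc1 : ¬ (cv.1 = w) := fun h => cv.2 (h ▸ hw)
      have hc2 : ¬ cv.1 = tail r.1 := fun h => cv.2 (h ▸ r.2.1)
      have hc3 : ¬ cv.1 = head r.1 := fun h => cv.2 (h ▸ r.2.2)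
      simp [hN, hMG, st11.colOp, st11.pureMat, heC, st11.eCdef, heE, st11.eEdef, hc1, hc2, hc3]
    · have hEq : N (Sum.inl r) (Sum.inr (Sum.inr y, j))
          = ∑ v ∈ W, MG (Sum.inl r.1) (v, j) := by
        simp [hN, st11.colOp, heC, st11.eCdef, heE, st11.eEdef]
      rw [hEq]
      have hpt : ∀ v : Fin n, MG (Sum.inl r.1) (v, j) =
          (if red r.1 = true ∧ a ≤ (j : ℕ) then 0
           else if v = tail r.1 then (X (r.1, j) : MvPolynomial (E × Fin (a + b)) ℝ)
           else if v = head r.1 then -X (r.1, j) else 0) := by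
        intro v; simp [hMG, st11.pureMat]
      rw [Finset.sum_congr rfl fun v _ => hpt v,
        st11.sum_entries tail head a W r.1 j red (hne r.1)]
      simp [r.2.1, r.2.2]
  obtain ⟨ε₁, hε₁, h3⟩ := st11.det_block_fact₁₂ N φ e₁ σQ hz
  -- the second block is the contraction matrix
  have hD : (Matrix.of fun i j : ContrV n W × Fin (a + b) =>
      N (Sum.inr (σQ.symm i)) (Sum.inr j)) = MQ.submatrix (⇑σQ.symm) id := by
    ext i j
    simp only [Matrix.of_apply, Matrix.submatrix_apply, id]
    rcases σQ.symm i with e | t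
    · rcases j with ⟨cv | y, j2⟩
      · have hc1 : ¬ (cv.1 = w) := fun h => cv.2 (h ▸ hw)
        simp [hN, hMG, hMQ, st11.colOp, st11.pureMat, heC, st11.eCdef, heE, st11.eEdef, hc1,
          st11.contrMap_eq_inl]
      · have hEq : N (Sum.inr (Sum.inl e)) (Sum.inr (Sum.inr y, j2))
            = ∑ v ∈ W, MG (Sum.inl e.1) (v, j2) := by
          simp [hN, st11.colOp, heC, st11.eCdef, heE, st11.eEdef]
        rw [hEq]
        have hpt : ∀ v : Fin n, MG (Sum.inl e.1) (v, j2) =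
            (if red e.1 = true ∧ a ≤ (j2 : ℕ) then 0
             else if v = tail e.1 then (X (e.1, j2) : MvPolynomial (E × Fin (a + b)) ℝ)
             else if v = head e.1 then -X (e.1, j2) else 0) := by
          intro v; simp [hMG, st11.pureMat]
        rw [Finset.sum_congr rfl fun v _ => hpt v,
          st11.sum_entries tail head a W e.1 j2 red (hne e.1)]
        by_cases ht : tail e.1 ∈ W <;> by_cases hh : head e.1 ∈ W
        · exact absurd ⟨ht, hh⟩ e.2
        · simp [hMQ, st11.pureMat, st11.contrMap_eq_inr, ht, hh]
        · simp [hMQ, st11.pureMat, st11.contrMap_eq_inr, ht, hh]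
        · simp [hMQ, st11.pureMat, st11.contrMap_eq_inr, ht, hh]
    · rcases j with ⟨cv | y, j2⟩
      · have hc1 : ¬ (cv.1 = w) := fun h => cv.2 (h ▸ hw)
        simp [hN, hMG, hMQ, st11.colOp, st11.pureMat, heC, st11.eCdef, heE, st11.eEdef, hc1,
          contrMap, hu, Prod.ext_iff, Subtype.ext_iff]
      · have hEq : N (Sum.inr (Sum.inr t)) (Sum.inr (Sum.inr y, j2))
            = ∑ v ∈ W, MG (Sum.inr t) (v, j2) := by
          simp [hN, st11.colOp, heC, st11.eCdef, heE, st11.eEdef]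
        rw [hEq]
        have hzero : ∑ v ∈ W, MG (Sum.inr t) (v, j2) = 0 := by
          refine Finset.sum_eq_zero fun v hv => ?_
          have hvu : ¬ v = u := fun h => hu (h ▸ hv)
          simp [hMG, st11.pureMat, Prod.ext_iff, hvu]
        rw [hzero]
        simp [hMQ, st11.pureMat, contrMap, hu, Prod.ext_iff]
  -- the H side
  have hH1 : (MH.submatrix (⇑σH.symm) id).det = (NH.submatrix (⇑φH) id).det := by
    have hsub2 : (MH.submatrix (⇑σH.symm) id).submatrix ⇑eCH ⇑eCH = NH.submatrix (⇑φH) id := by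
      ext r c
      simp [hNH, hφH, Matrix.submatrix_apply]
    rw [← Matrix.det_submatrix_equiv_self eCH (MH.submatrix (⇑σH.symm) id), hsub2]
  have hz2 : ∀ (i : Fin (a + b))
      (c : {x : {v : Fin n // v ∈ W} // x ≠ (⟨w, hw⟩ : {v : Fin n // v ∈ W})} × Fin (a + b)),
      NH (Sum.inr i) (Sum.inl c) = 0 := by
    intro i c
    have hc1 : ¬ (c.1.1 = (⟨w, hw⟩ : {v : Fin n // v ∈ W})) := c.1.2
    simp [hNH, hMH, st11.pureMat, heCH, st11.eCHdef, Prod.ext_iff, hc1]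
  obtain ⟨ε₂, hε₂, h4⟩ := st11.det_block_fact₂₁ NH φH e₁ (Equiv.refl (Fin (a + b))) hz2
  have hD1 : (Matrix.of fun i j : Fin (a + b) =>
      NH (Sum.inr ((Equiv.refl (Fin (a + b))).symm i)) (Sum.inr j)) = 1 := by
    ext i j
    have hent : NH (Sum.inr ((Equiv.refl (Fin (a + b))).symm i)) (Sum.inr j)
        = if ((⟨w, hw⟩ : {v : Fin n // v ∈ W}), j) = (⟨w, hw⟩, i) then 1 else 0 := by
      simp [hNH, hMH, st11.pureMat, heCH, st11.eCHdef]
    rw [Matrix.of_apply, hent]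
    simp only [Prod.mk.injEq, true_and]
    rw [Matrix.one_apply]
    by_cases h : i = j <;> simp [h, eq_comm]
  have hA : (Matrix.of fun i j => NH (Sum.inl (e₁.symm i)) (Sum.inl j))
      = (Matrix.of fun i j => N (Sum.inl (e₁.symm i)) (Sum.inl j)) := by
    ext i j
    rcases j with ⟨jv, j2⟩
    have hj1 : ¬ (jv.1.1 = w) := fun h => jv.2 (Subtype.ext h)
    simp [hNH, hN, hMH, hMG, st11.pureMat, heCH, st11.eCHdef, heC, st11.eCdef, heE, st11.eEdef,
      st11.colOp, hj1, Subtype.ext_iff]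
  -- assemble
  have hHdet : pureCond (a + b) a
      (fun e : {e : E // tail e ∈ W ∧ head e ∈ W} =>
        (⟨tail e.1, e.2.1⟩ : {v : Fin n // v ∈ W}))
      (fun e => (⟨head e.1, e.2.2⟩ : {v : Fin n // v ∈ W}))
      (fun e => red e.1) (fun e => e.1) (⟨w, hw⟩ : {v : Fin n // v ∈ W}) σH
      = ε₂ * (Matrix.of fun i j => N (Sum.inl (e₁.symm i)) (Sum.inl j)).det := by
    rw [hHH, hH1, h4, hA, hD1, Matrix.det_one, mul_one]
  have hfinal : pureCond (a + b) a tail head red id u σG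
      = (ε₁ * ε₂) * (pureCond (a + b) a
          (fun e : {e : E // ¬(tail e ∈ W ∧ head e ∈ W)} => contrMap W (tail e.1))
          (fun e => contrMap W (head e.1)) (fun e => red e.1) (fun e => e.1)
          (contrMap W u) σQ *
        pureCond (a + b) a
          (fun e : {e : E // tail e ∈ W ∧ head e ∈ W} =>
            (⟨tail e.1, e.2.1⟩ : {v : Fin n // v ∈ W}))
          (fun e => (⟨head e.1, e.2.2⟩ : {v : Fin n // v ∈ W}))
          (fun e => red e.1) (fun e => e.1) (⟨w, hw⟩ : {v : Fin n // v ∈ W}) σH) := by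
    rw [hG, h1, h2, h3, hD, ← hQQ, hHdet]
    rcases hε₂ with h | h <;> rw [h] <;> ring
  rcases hε₁ with h1' | h1' <;> rcases hε₂ with h2' | h2'
  · exact ⟨1, Or.inl rfl, by rw [hfinal, h1', h2', map_one]; ring⟩
  · exact ⟨-1, Or.inr rfl, by rw [hfinal, h1', h2', map_neg, map_one]; ring⟩
  · exact ⟨-1, Or.inr rfl, by rw [hfinal, h1', h2', map_neg, map_one]; ring⟩
  · exact ⟨1, Or.inl rfl, by rw [hfinal, h1', h2', map_one]; ring⟩
end

section
/- Let G be a multigraph on n vertices with edge set E. An orientation of G is a function o : E → Bool, where o(e) = true means e is directed from tail e to head e and o(e) = false means e is directed from head e to tail e; the out-degree of a vertex v under o is the number of edges directed out of v. A directed cycle (polygon) of an orientation o is a nonempty closed walk that traverses distinct edges, each in its assigned direction. If an orientation o of G has no directed cycle, then o is the unique orientation of G whose out-degree at every vertex v equals the out-degree of o at v; that is, any orientation o' with the same out-degree as o at every vertex satisfies o' = o. -/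
open MvPolynomial

/-- an orientation with no directed cycle is the unique orientation
with its out-degree sequence. -/
theorem stmt12 {n : ℕ} {E : Type} [Fintype E] [DecidableEq E]
    (tail head : E → Fin n) (hlt : ∀ e, tail e < head e)
    (o : E → Bool) (hac : ¬ HasDirCycle tail head o) :
    ∀ o' : E → Bool, (∀ v : Fin n, outDeg tail head o' v = outDeg tail head o v) →
      o' = o := by
  classical
  intro o' hdeg
  by_contra hne
  have hDne : ∃ e, o' e ≠ o e := by
    by_contra h
    push_neg at h
    exact hne (funext h)
  set src : E → Fin n := fun e => if o e then tail e else head e with hsrc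
  set dst : E → Fin n := fun e => if o e then head e else tail e with hdst
  have hout : ∀ (p : E → Bool) (v : Fin n),
      outDeg tail head p v
        = (Finset.univ.filter fun e => (if p e then tail e else head e) = v).card := by
    intro p v
    unfold outDeg
    congr 1
    apply Finset.filter_congr
    intro e _
    cases hpe : p e <;> simp [hpe]
  have key : ∀ v, (Finset.univ.filter fun e => (o' e ≠ o e) ∧ dst e = v).card =
      (Finset.univ.filter fun e => (o' e ≠ o e) ∧ src e = v).card := by
    intro v
    have h1 := hdeg v
    rw [hout o' v, hout o v] at h1
    have e1 : (Finset.univ.filter fun e => (if o' e then tail e else head e) = v)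
        = (Finset.univ.filter fun e => (o' e ≠ o e) ∧ dst e = v)
          ∪ (Finset.univ.filter fun e => ¬(o' e ≠ o e) ∧ src e = v) := by
      ext e
      simp only [Finset.mem_filter, Finset.mem_union, Finset.mem_univ, true_and]
      cases ho : o e <;> cases ho' : o' e <;> simp [hsrc, hdst, ho, ho']
    have e2 : (Finset.univ.filter fun e => (if o e then tail e else head e) = v)
        = (Finset.univ.filter fun e => (o' e ≠ o e) ∧ src e = v)
          ∪ (Finset.univ.filter fun e => ¬(o' e ≠ o e) ∧ src e = v) := by
      ext e
      simp only [Finset.mem_filter, Finset.mem_union, Finset.mem_univ, true_and]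
      cases ho : o e <;> cases ho' : o' e <;> simp [hsrc, hdst, ho, ho']
    have d1 : Disjoint (Finset.univ.filter fun e => (o' e ≠ o e) ∧ dst e = v)
        (Finset.univ.filter fun e => ¬(o' e ≠ o e) ∧ src e = v) := by
      rw [Finset.disjoint_left]
      intro e he1 he2
      simp only [Finset.mem_filter] at he1 he2
      exact he2.2.1 he1.2.1
    have d2 : Disjoint (Finset.univ.filter fun e => (o' e ≠ o e) ∧ src e = v)
        (Finset.univ.filter fun e => ¬(o' e ≠ o e) ∧ src e = v) := by
      rw [Finset.disjoint_left]
      intro e he1 he2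
      simp only [Finset.mem_filter] at he1 he2
      exact he2.2.1 he1.2.1
    rw [e1, e2, Finset.card_union_of_disjoint d1, Finset.card_union_of_disjoint d2] at h1
    omega
  obtain ⟨e0, he0⟩ := hDne
  have hstep : ∀ e, o' e ≠ o e → ∃ e', (o' e' ≠ o e') ∧ src e' = dst e := by
    intro e he
    have hpos : 0 < (Finset.univ.filter fun e' => (o' e' ≠ o e') ∧ src e' = dst e).card := by
      rw [← key (dst e)]
      apply Finset.card_pos.mpr
      exact ⟨e, Finset.mem_filter.mpr ⟨Finset.mem_univ e, he, rfl⟩⟩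
    obtain ⟨e', he'⟩ := Finset.card_pos.mp hpos
    simp only [Finset.mem_filter] at he'
    exact ⟨e', he'.2⟩
  have hstep' : ∀ e : E, ∃ e', (o' e ≠ o e → ((o' e' ≠ o e') ∧ src e' = dst e)) := by
    intro e
    by_cases h : o' e ≠ o e
    · obtain ⟨e', h1, h2⟩ := hstep e h
      exact ⟨e', fun _ => ⟨h1, h2⟩⟩
    · exact ⟨e0, fun hc => absurd hc h⟩
  choose step hstepspec using hstep'
  set f : ℕ → E := fun k => step^[k] e0 with hf
  have hfsucc : ∀ k, f (k + 1) = step (f k) := by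
    intro k
    simp only [hf]
    exact Function.iterate_succ_apply' step k e0
  have hfD : ∀ k, o' (f k) ≠ o (f k) := by
    intro k
    induction k with
    | zero => exact he0
    | succ k ih =>
      rw [hfsucc k]
      exact (hstepspec (f k) ih).1
  have hlink : ∀ k, src (f (k + 1)) = dst (f k) := by
    intro k
    rw [hfsucc k]
    exact (hstepspec (f k) (hfD k)).2
  set vs : ℕ → Fin n := fun k => src (f k) with hvs
  have hnotinj : ¬ Function.Injective (fun k : Fin (n + 1) => vs k) := by
    intro hinj
    have hc := Fintype.card_le_of_injective _ hinj
    simp only [Fintype.card_fin] at hc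
    omega
  rw [Function.not_injective_iff] at hnotinj
  obtain ⟨a, b, hab, hne'⟩ := hnotinj
  have hQex : ∃ j : ℕ, ∃ i : ℕ, i < j ∧ vs i = vs j := by
    rcases lt_trichotomy (a : ℕ) (b : ℕ) with h | h | h
    · exact ⟨b, a, h, hab⟩
    · exact absurd (Fin.ext h) hne'
    · exact ⟨a, b, h, hab.symm⟩
  obtain ⟨i, hij, hvij⟩ := Nat.find_spec hQex
  set J := Nat.find hQex with hJ
  have hmin : ∀ m, m < J → ¬ ∃ i, i < m ∧ vs i = vs m :=
    fun m hm => Nat.find_min hQex hm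
  have hinjOn : ∀ i1 i2, i1 < J → i2 < J → vs i1 = vs i2 → i1 = i2 := by
    intro i1 i2 h1 h2 hv
    rcases lt_trichotomy i1 i2 with h | h | h
    · exact absurd ⟨i1, h, hv⟩ (hmin i2 h2)
    · exact h
    · exact absurd ⟨i2, h, hv.symm⟩ (hmin i1 h1)
  apply hac
  refine ⟨J - i, Nat.sub_pos_of_lt hij, fun t => f (i + t), fun t => vs (i + t),
    ?_, ?_, ?_⟩
  · intro t1 t2 ht
    have hv : vs (i + (t1 : ℕ)) = vs (i + (t2 : ℕ)) := by
      simp only [hvs]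
      simp only at ht
      rw [ht]
    have h1 : i + (t1 : ℕ) < J := by
      have := t1.isLt
      omega
    have h2 : i + (t2 : ℕ) < J := by
      have := t2.isLt
      omega
    have := hinjOn _ _ h1 h2 hv
    exact Fin.ext (by omega)
  · simp only [Fin.val_zero, Fin.val_last, Nat.add_zero]
    rw [Nat.add_sub_cancel' hij.le]
    exact hvij
  · intro t
    have h1 : src (f (i + (t : ℕ))) = vs (i + (t : ℕ)) := rfl
    have h2 : dst (f (i + (t : ℕ))) = vs (i + (t : ℕ) + 1) := (hlink (i + (t : ℕ))).symm
    simp only [Fin.coe_castSucc, Fin.val_succ]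
    cases ho : o (f (i + (t : ℕ))) with
    | true =>
      left
      refine ⟨rfl, ?_, ?_⟩
      · rw [← h1]; simp [hsrc, ho]
      · rw [show i + ((t : ℕ) + 1) = i + (t : ℕ) + 1 by omega, ← h2]
        simp [hdst, ho]
    | false =>
      right
      refine ⟨rfl, ?_, ?_⟩
      · rw [← h1]; simp [hsrc, ho]
      · rw [show i + ((t : ℕ) + 1) = i + (t : ℕ) + 1 by omega, ← h2]
        simp [hdst, ho]
end

section
/- Let G be an [a,b]-graph on n vertices (a, b positive integers, k = a + b) with pure condition C_G (standard tie-down at a vertex u), let f be an irreducible factor of C_G in S, and let p : E × Fin k → ℝ be any point at which f evaluates to 0. Then G(p) has a stress, i.e., there is a nonzero vector ω : E → ℝ with ω ⬝ M(G(p)) = 0. -/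
open MvPolynomial

/-- at any zero `p` of an irreducible factor `f` of the pure condition,
the framework `G(p)` has a stress: a nonzero row dependence of `M(G(p))`. -/
theorem stmt16 {n : ℕ} {E : Type} [Fintype E] [DecidableEq E]
    (tail head : E → Fin n) (hlt : ∀ e, tail e < head e)
    (red : E → Bool) (a b : ℕ) (ha : 0 < a) (hb : 0 < b)
    (hsparse : ABSparseOn tail head red a b (Finset.univ : Finset E))
    (hE : Fintype.card E = (a + b) * n - (a + b))
    (u : Fin n) (σ : (E ⊕ Fin (a + b)) ≃ (Fin n × Fin (a + b)))
    (f : MvPolynomial (E × Fin (a + b)) ℝ) (hf : Irreducible f)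
    (hdvd : f ∣ pureCond (a + b) a tail head red id u σ)
    (p : E × Fin (a + b) → ℝ) (hp : eval p f = 0) :
    ∃ ω : E → ℝ, ω ≠ 0 ∧ Matrix.vecMul ω (rigidityMatrixR a tail head red p) = 0 := by
  classical
  let k := a + b
  have hCG : eval p (pureCond (a + b) a tail head red id u σ) = 0 := by
    obtain ⟨g, hg⟩ := hdvd
    rw [hg, map_mul, hp, zero_mul]
  -- the evaluated tied-down matrix
  set M : Matrix E (Fin n × Fin k) ℝ := rigidityMatrixR a tail head red p with hM
  set N : Matrix (Fin n × Fin k) (Fin n × Fin k) ℝ :=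
    Matrix.of (fun r c => Sum.elim (fun e => M e c)
      (fun i : Fin k => if c = (u, i) then (1 : ℝ) else 0) (σ.symm r)) with hN
  have hdet : N.det = 0 := by
    have h2 : N = (Matrix.of fun r c : Fin n × Fin k =>
        Sum.elim
          (fun e =>
            if red e = true ∧ a ≤ (c.2 : ℕ) then 0
            else if c.1 = tail e then (X (id e, c.2) : MvPolynomial (E × Fin k) ℝ)
            else if c.1 = head e then -X (id e, c.2)
            else 0)
          (fun i => if c = (u, i) then 1 else 0)
          (σ.symm r)).map (eval p) := by
      ext r c
      rcases hs : σ.symm r with e | i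
      · simp [hN, hM, rigidityMatrixR, Matrix.map_apply, hs, apply_ite (eval p)]
      · simp [hN, Matrix.map_apply, hs, apply_ite (eval p)]
    rw [h2]
    exact ((RingHom.map_det (eval p) _).symm.trans hCG)
  obtain ⟨v, hv0, hv⟩ := Matrix.exists_vecMul_eq_zero_iff.mpr hdet
  set ω : E → ℝ := fun e => v (σ (Sum.inl e)) with hω
  set μ : Fin k → ℝ := fun i => v (σ (Sum.inr i)) with hμ
  have hcol : ∀ c : Fin n × Fin k,
      (∑ e, ω e * M e c) + (if c.1 = u then μ c.2 else 0) = 0 := by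
    intro c
    have h1 := congrFun hv c
    simp only [Matrix.vecMul, dotProduct, Pi.zero_apply] at h1
    have h2 : ∑ r : Fin n × Fin k, v r * N r c
        = (∑ e, ω e * M e c) + ∑ i : Fin k, μ i * (if c = (u, i) then 1 else 0) := by
      rw [← Fintype.sum_equiv σ (fun s => v (σ s) * N (σ s) c)
        (fun r => v r * N r c) (fun s => rfl)]
      rw [Fintype.sum_sum_type]
      congr 1
      · exact Finset.sum_congr rfl fun e _ => by simp [hN, hω]
      · exact Finset.sum_congr rfl fun i _ => by simp [hN, hμ]
    have h3 : ∑ i : Fin k, μ i * (if c = (u, i) then 1 else 0)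
        = (if c.1 = u then μ c.2 else 0) := by
      by_cases hcu : c.1 = u
      · simp only [Prod.ext_iff, hcu, true_and, mul_ite, mul_one, mul_zero, if_pos]
        simp
      · simp [Prod.ext_iff, hcu]
    rw [h2, h3] at h1
    exact h1
  have hrow : ∀ (e : E) (i : Fin k), ∑ w : Fin n, M e (w, i) = 0 := by
    intro e i
    by_cases hred : red e = true ∧ a ≤ (i : ℕ)
    · simp [hM, rigidityMatrixR, hred]
    · have hne : head e ≠ tail e := (ne_of_lt (hlt e)).symm
      simp only [hM, rigidityMatrixR, Matrix.of_apply, if_neg hred]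
      have hsplit : ∀ w : Fin n,
          (if w = tail e then p (e, i) else if w = head e then -p (e, i) else 0)
            = (if w = tail e then p (e, i) else 0) + (if w = head e then -p (e, i) else 0) := by
        intro w
        by_cases h1 : w = tail e
        · subst h1; simp [Ne.symm hne]
        · simp [h1]
      rw [Finset.sum_congr rfl (fun w _ => hsplit w), Finset.sum_add_distrib,
        Finset.sum_ite_eq', Finset.sum_ite_eq']
      simp
  have hne' : ∀ c : Fin n × Fin k, c.1 ≠ u → (∑ e, ω e * M e c) = 0 := by
    intro c hc
    have := hcol c
    rwa [if_neg hc, add_zero] at this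
  have hMzero : ∀ c : Fin n × Fin k, (∑ e, ω e * M e c) = 0 := by
    rintro ⟨w, i⟩
    by_cases hw : w = u
    · subst hw
      have hsum : ∑ w' : Fin n, (∑ e, ω e * M e (w', i)) = 0 := by
        rw [Finset.sum_comm]
        apply Finset.sum_eq_zero
        intro e _
        rw [← Finset.mul_sum, hrow, mul_zero]
      have hsingle := Finset.sum_eq_single (s := (Finset.univ : Finset (Fin n)))
        (f := fun w' => ∑ e, ω e * M e (w', i)) w
        (fun b _ hb => hne' (b, i) hb) (by simp)
      rw [hsingle] at hsum
      exact hsum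
    · exact hne' (w, i) hw
  refine ⟨ω, ?_, ?_⟩
  · intro h0
    have hμ0 : ∀ i, μ i = 0 := by
      intro i
      have h := hcol (u, i)
      rw [if_pos rfl] at h
      have : (∑ e, ω e * M e (u, i)) = 0 := by
        apply Finset.sum_eq_zero
        intro e _
        rw [show ω e = 0 from congrFun h0 e, zero_mul]
      rw [this, zero_add] at h
      exact h
    apply hv0
    funext r
    have h : v (σ (σ.symm r)) = 0 := by
      rcases σ.symm r with e | i
      · exact congrFun h0 e
      · exact hμ0 i
    simpa using h
  · funext c
    simpa [Matrix.vecMul, dotProduct] using hMzero c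
end
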